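/- arXiv:2107.04105 — 2 statements merged into one kernel-verified Lean document; each statement's English description precedes it below -/
import Mathlib

section
/- Let τ : ℂ[z₀,…,z₁₇] → ℂ[u₀,u₁,v₀,v₁,x] be the ℂ-algebra homomorphism determined by z₀ ↦ u₀²u₁²v₀²v₁², z₁ ↦ u₁⁴v₁⁴, z₂ ↦ u₁⁴v₀⁴, z₃ ↦ u₀⁴v₁⁴, z₄ ↦ u₀⁴v₀⁴, z₅ ↦ x², z₆ ↦ u₁⁴v₀²v₁², z₇ ↦ u₀²u₁²v₁⁴, z₈ ↦ u₀²u₁²v₀⁴, z₉ ↦ u₀⁴v₀²v₁², z₁₀ ↦ u₁²v₀v₁·x, z₁₁ ↦ u₀u₁v₁²·x, z₁₂ ↦ u₀u₁v₀²·x, z₁₃ ↦ u₀²v₀v₁·x, z₁₄ ↦ u₀u₁³v₀v₁³, z₁₅ ↦ u₀u₁³v₀³v₁, z₁₆ ↦ u₀³u₁v₀v₁³, z₁₇ ↦ u₀³u₁v₀³v₁. Then the kernel of τ is generated, as an ideal of ℂ[z₀,…,z₁₇], by its homogeneous elements of degree 2. -/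
set_option maxHeartbeats 1000000

open MvPolynomial

/-- The ℂ-algebra homomorphism τ : ℂ[z₀,…,z₁₇] → ℂ[u₀,u₁,v₀,v₁,x]
(variables `X 0,X 1` = u₀,u₁; `X 2,X 3` = v₀,v₁; `X 4` = x) determined by
z₀ ↦ u₀²u₁²v₀²v₁², z₁ ↦ u₁⁴v₁⁴, z₂ ↦ u₁⁴v₀⁴, z₃ ↦ u₀⁴v₁⁴, z₄ ↦ u₀⁴v₀⁴, z₅ ↦ x²,
z₆ ↦ u₁⁴v₀²v₁², z₇ ↦ u₀²u₁²v₁⁴, z₈ ↦ u₀²u₁²v₀⁴, z₉ ↦ u₀⁴v₀²v₁²,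
z₁₀ ↦ u₁²v₀v₁x, z₁₁ ↦ u₀u₁v₁²x, z₁₂ ↦ u₀u₁v₀²x, z₁₃ ↦ u₀²v₀v₁x,
z₁₄ ↦ u₀u₁³v₀v₁³, z₁₅ ↦ u₀u₁³v₀³v₁, z₁₆ ↦ u₀³u₁v₀v₁³, z₁₇ ↦ u₀³u₁v₀³v₁. -/
noncomputable def tau : MvPolynomial (Fin 18) ℂ →ₐ[ℂ] MvPolynomial (Fin 5) ℂ :=
  aeval ![X 0 ^ 2 * X 1 ^ 2 * X 2 ^ 2 * X 3 ^ 2, X 1 ^ 4 * X 3 ^ 4, X 1 ^ 4 * X 2 ^ 4,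
    X 0 ^ 4 * X 3 ^ 4, X 0 ^ 4 * X 2 ^ 4, X 4 ^ 2,
    X 1 ^ 4 * X 2 ^ 2 * X 3 ^ 2, X 0 ^ 2 * X 1 ^ 2 * X 3 ^ 4,
    X 0 ^ 2 * X 1 ^ 2 * X 2 ^ 4, X 0 ^ 4 * X 2 ^ 2 * X 3 ^ 2,
    X 1 ^ 2 * X 2 * X 3 * X 4, X 0 * X 1 * X 3 ^ 2 * X 4,
    X 0 * X 1 * X 2 ^ 2 * X 4, X 0 ^ 2 * X 2 * X 3 * X 4,
    X 0 * X 1 ^ 3 * X 2 * X 3 ^ 3, X 0 * X 1 ^ 3 * X 2 ^ 3 * X 3,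
    X 0 ^ 3 * X 1 * X 2 * X 3 ^ 3, X 0 ^ 3 * X 1 * X 2 ^ 3 * X 3]

def wt : Fin 18 → Fin 5 → ℕ :=
  ![![2,2,2,2,0], ![0,4,0,4,0], ![0,4,4,0,0], ![4,0,0,4,0], ![4,0,4,0,0], ![0,0,0,0,2],
    ![0,4,2,2,0], ![2,2,0,4,0], ![2,2,4,0,0], ![4,0,2,2,0],
    ![0,2,1,1,1], ![1,1,0,2,1], ![1,1,2,0,1], ![2,0,1,1,1],
    ![1,3,1,3,0], ![1,3,3,1,0], ![3,1,1,3,0], ![3,1,3,1,0]]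

noncomputable def wtF (i : Fin 18) : Fin 5 →₀ ℕ := Finsupp.equivFunOnFinite.symm (wt i)

noncomputable def gens : Fin 18 → MvPolynomial (Fin 5) ℂ :=
  ![X 0 ^ 2 * X 1 ^ 2 * X 2 ^ 2 * X 3 ^ 2, X 1 ^ 4 * X 3 ^ 4, X 1 ^ 4 * X 2 ^ 4,
    X 0 ^ 4 * X 3 ^ 4, X 0 ^ 4 * X 2 ^ 4, X 4 ^ 2,
    X 1 ^ 4 * X 2 ^ 2 * X 3 ^ 2, X 0 ^ 2 * X 1 ^ 2 * X 3 ^ 4,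
    X 0 ^ 2 * X 1 ^ 2 * X 2 ^ 4, X 0 ^ 4 * X 2 ^ 2 * X 3 ^ 2,
    X 1 ^ 2 * X 2 * X 3 * X 4, X 0 * X 1 * X 3 ^ 2 * X 4,
    X 0 * X 1 * X 2 ^ 2 * X 4, X 0 ^ 2 * X 2 * X 3 * X 4,
    X 0 * X 1 ^ 3 * X 2 * X 3 ^ 3, X 0 * X 1 ^ 3 * X 2 ^ 3 * X 3,
    X 0 ^ 3 * X 1 * X 2 * X 3 ^ 3, X 0 ^ 3 * X 1 * X 2 ^ 3 * X 3]

lemma mono_eq (f : Fin 5 → ℕ) : (monomial (Finsupp.equivFunOnFinite.symm f) 1 : MvPolynomial (Fin 5) ℂ) = ∏ k : Fin 5, X k ^ f k := by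
  rw [monomial_eq, C_1, one_mul, Finsupp.prod_fintype]
  · rfl
  · intro k; exact pow_zero _

lemma gens_eq (i : Fin 18) : gens i = monomial (wtF i) 1 := by
  fin_cases i <;>
  · rw [show wtF _ = Finsupp.equivFunOnFinite.symm _ from rfl, mono_eq, Fin.prod_univ_five]
    show _ = _
    simp only [gens, wt]
    norm_num
    simp only [Matrix.cons_val, Matrix.cons_val_fin_one, Fin.reduceFinMk, Fin.isValue]
    try ring


lemma tau_X (i : Fin 18) : tau (X i) = gens i := by simp [tau, gens]

noncomputable def mOf (m : Multiset (Fin 18)) : MvPolynomial (Fin 18) ℂ := (m.map X).prod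

noncomputable def wsum (m : Multiset (Fin 18)) : Fin 5 →₀ ℕ := (m.map wtF).sum

@[simp] lemma mOf_zero : mOf 0 = 1 := rfl
@[simp] lemma mOf_cons (i : Fin 18) (m : Multiset (Fin 18)) : mOf (i ::ₘ m) = X i * mOf m := by
  simp [mOf]
@[simp] lemma wsum_zero : wsum 0 = 0 := rfl
@[simp] lemma wsum_cons (i : Fin 18) (m : Multiset (Fin 18)) : wsum (i ::ₘ m) = wtF i + wsum m := by
  simp [wsum]

lemma tau_mOf (m : Multiset (Fin 18)) : tau (mOf m) = monomial (wsum m) 1 := by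
  induction m using Multiset.induction_on with
  | empty => simp
  | cons i m ih =>
      rw [mOf_cons, map_mul, tau_X, gens_eq, ih, monomial_mul, one_mul, wsum_cons]

lemma toFinsupp_cons' (i : Fin 18) (m : Multiset (Fin 18)) :
    (i ::ₘ m).toFinsupp = Finsupp.single i 1 + m.toFinsupp := by
  ext a
  by_cases h : a = i
  · simp [Multiset.count_cons, Finsupp.single_apply, h, add_comm]
  · have h' : ¬ (i = a) := fun hh => h hh.symm
    simp [Multiset.count_cons, Finsupp.single_apply, h, h']

lemma mOf_toFinsupp (m : Multiset (Fin 18)) : mOf m = monomial (m.toFinsupp) 1 := by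
  induction m using Multiset.induction_on with
  | empty => simp
  | cons i m ih =>
      rw [mOf_cons, ih, X, monomial_mul, one_mul, toFinsupp_cons']

lemma monomial_eq_mOf (d : Fin 18 →₀ ℕ) : (monomial d 1 : MvPolynomial (Fin 18) ℂ) = mOf d.toMultiset := by
  rw [mOf_toFinsupp, Finsupp.toMultiset_toFinsupp]

noncomputable def Esum (d : Fin 18 →₀ ℕ) : Fin 5 →₀ ℕ := wsum d.toMultiset

lemma tau_monomial (d : Fin 18 →₀ ℕ) (c : ℂ) : tau (monomial d c) = monomial (Esum d) c := by
  have h1 : (monomial d c : MvPolynomial (Fin 18) ℂ) = C c * monomial d 1 := by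
    rw [C_mul_monomial, mul_one]
  have hc : tau (C c) = C c := by simp [tau]
  rw [h1, map_mul, monomial_eq_mOf, tau_mOf, hc, C_mul_monomial, mul_one]
  rfl

lemma wt_total (i : Fin 18) : wt i 0 + wt i 1 + wt i 2 + wt i 3 + 4 * wt i 4 = 8 := by
  fin_cases i <;> rfl

lemma card_eq_of_wsum (m m' : Multiset (Fin 18)) (h : wsum m = wsum m') :
    Multiset.card m = Multiset.card m' := by
  have key : ∀ m : Multiset (Fin 18),
      8 * Multiset.card m = wsum m 0 + wsum m 1 + wsum m 2 + wsum m 3 + 4 * wsum m 4 := by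
    intro m
    induction m using Multiset.induction_on with
    | empty => simp
    | cons i m ih =>
        simp only [wsum_cons, Multiset.card_cons, Finsupp.add_apply]
        have := wt_total i
        have h0 : wtF i 0 = wt i 0 := rfl
        have h1 : wtF i 1 = wt i 1 := rfl
        have h2 : wtF i 2 = wt i 2 := rfl
        have h3 : wtF i 3 = wt i 3 := rfl
        have h4 : wtF i 4 = wt i 4 := rfl
        omega
  have h1 := key m
  have h2 := key m'
  rw [h] at h1
  omega

noncomputable def J : Ideal (MvPolynomial (Fin 18) ℂ) :=
  Ideal.span {f | f ∈ RingHom.ker tau ∧ f.IsHomogeneous 2}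

def Step (m m' : Multiset (Fin 18)) : Prop :=
  ∃ i j k l c, m = i ::ₘ j ::ₘ c ∧ m' = k ::ₘ l ::ₘ c ∧ wtF i + wtF j = wtF k + wtF l

def Conn : Multiset (Fin 18) → Multiset (Fin 18) → Prop := Relation.ReflTransGen Step

lemma step_symm {m m' : Multiset (Fin 18)} (h : Step m m') : Step m' m := by
  obtain ⟨i, j, k, l, c, h1, h2, h3⟩ := h
  exact ⟨k, l, i, j, c, h2, h1, h3.symm⟩

lemma conn_refl (m : Multiset (Fin 18)) : Conn m m := Relation.ReflTransGen.refl

lemma conn_trans {a b c : Multiset (Fin 18)} (h1 : Conn a b) (h2 : Conn b c) : Conn a c :=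
  Relation.ReflTransGen.trans h1 h2

lemma conn_symm {a b : Multiset (Fin 18)} (h : Conn a b) : Conn b a := by
  induction h with
  | refl => exact conn_refl _
  | tail hs ih => exact Relation.ReflTransGen.head (step_symm ih) (by assumption)

lemma conn_of_step {a b : Multiset (Fin 18)} (h : Step a b) : Conn a b :=
  Relation.ReflTransGen.single h

lemma quad_mem (i j k l : Fin 18) (h : wtF i + wtF j = wtF k + wtF l) :
    (X i * X j - X k * X l : MvPolynomial (Fin 18) ℂ) ∈ J := by
  apply Ideal.subset_span
  constructor
  · rw [RingHom.mem_ker, map_sub]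
    have e1 : tau (X i * X j) = monomial (wtF i + wtF j) 1 := by
      rw [map_mul, tau_X, tau_X, gens_eq, gens_eq, monomial_mul, one_mul]
    have e2 : tau (X k * X l) = monomial (wtF k + wtF l) 1 := by
      rw [map_mul, tau_X, tau_X, gens_eq, gens_eq, monomial_mul, one_mul]
    rw [e1, e2, h, sub_self]
  · have h1 : (X i * X j : MvPolynomial (Fin 18) ℂ).IsHomogeneous 2 :=
      (isHomogeneous_X ℂ i).mul (isHomogeneous_X ℂ j)
    have h2 : (X k * X l : MvPolynomial (Fin 18) ℂ).IsHomogeneous 2 :=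
      (isHomogeneous_X ℂ k).mul (isHomogeneous_X ℂ l)
    exact h1.sub h2

lemma step_diff_mem {m m' : Multiset (Fin 18)} (h : Step m m') : mOf m - mOf m' ∈ J := by
  obtain ⟨i, j, k, l, c, h1, h2, h3⟩ := h
  rw [h1, h2, mOf_cons, mOf_cons, mOf_cons, mOf_cons, ← mul_assoc, ← mul_assoc, ← sub_mul]
  exact Ideal.mul_mem_right _ _ (quad_mem i j k l h3)

lemma conn_diff_mem {m m' : Multiset (Fin 18)} (h : Conn m m') : mOf m - mOf m' ∈ J := by
  induction h with
  | refl => rw [sub_self]; exact Ideal.zero_mem _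
  | tail _ hstep ih =>
      have h2 := step_diff_mem hstep
      have := Ideal.add_mem _ ih h2
      rwa [sub_add_sub_cancel] at this

def lwt : Fin 10 → Fin 5 → ℕ :=
  ![![0,2,0,2,0], ![0,2,1,1,0], ![0,2,2,0,0],
    ![1,1,0,2,0], ![1,1,1,1,0], ![1,1,2,0,0],
    ![2,0,0,2,0], ![2,0,1,1,0], ![2,0,2,0,0],
    ![0,0,0,0,1]]

def par (l : Fin 10) : Bool := l.val % 2 == 1

def zOf : Fin 10 → Fin 10 → Fin 18 :=
  ![![1,0,6,0,14,0,7,0,0,0],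
    ![0,6,0,14,0,15,0,0,0,10],
    ![6,0,2,0,15,0,0,0,8,0],
    ![0,14,0,7,0,0,0,16,0,11],
    ![14,0,15,0,0,0,16,0,17,0],
    ![0,15,0,0,0,8,0,17,0,12],
    ![7,0,0,0,16,0,3,0,9,0],
    ![0,0,0,16,0,17,0,9,0,13],
    ![0,0,8,0,17,0,9,0,4,0],
    ![0,10,0,11,0,12,0,13,0,5]]

def pr : Fin 18 → Fin 10 × Fin 10 :=
  ![(4,4),(0,0),(2,2),(6,6),(8,8),(9,9),(0,2),(0,6),(2,8),(6,8),
    (1,9),(3,9),(5,9),(7,9),(0,4),(2,4),(6,4),(8,4)]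

-- F1 : pairs decompose weights
lemma F1 : ∀ (z : Fin 18) (k : Fin 5), lwt (pr z).1 k + lwt (pr z).2 k = wt z k := by decide
-- F2 : pairs have equal parity
lemma F2 : ∀ z : Fin 18, par (pr z).1 = par (pr z).2 := by decide
-- F3 : zOf of a same-parity pair has the right weight
lemma F3 : ∀ p q : Fin 10, par p = par q → ∀ k, wt (zOf p q) k = lwt p k + lwt q k := by decide
-- F4 : zOf symmetric
lemma F4 : ∀ p q : Fin 10, zOf p q = zOf q p := by decide
-- F5 : section property
lemma F5 : ∀ z : Fin 18, zOf (pr z).1 (pr z).2 = z := by decide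
-- winj : weights determine generators
lemma winj : ∀ z z' : Fin 18, (∀ k, wt z k = wt z' k) → z = z' := by decide

lemma F6 (p q p' q' : Fin 10) (hp : par p = par q) (hp' : par p' = par q')
    (h : ∀ k, lwt p k + lwt q k = lwt p' k + lwt q' k) : zOf p q = zOf p' q' := by
  apply winj
  intro k
  rw [F3 p q hp, F3 p' q' hp', h]

lemma parb : ∀ l l' : Fin 10,
    (par l = par l') ↔ ((lwt l 0 + lwt l 2 + lwt l 4) % 2 = (lwt l' 0 + lwt l' 2 + lwt l' 4) % 2) := by
  decide

lemma PAR2 {p q p' q' : Fin 10} (h : ∀ k, lwt p k + lwt q k = lwt p' k + lwt q' k) :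
    (par p = par q) ↔ (par p' = par q') := by
  rw [parb, parb]
  have h0 := h 0; have h2 := h 2; have h4 := h 4
  omega

-- letters other than x are determined by coords 0 and 2
lemma yinj : ∀ l l' : Fin 10, l ≠ 9 → l' ≠ 9 → lwt l 0 = lwt l' 0 → lwt l 2 = lwt l' 2 → l = l' := by decide

-- x detection
lemma lwt4 : ∀ l : Fin 10, lwt l 4 = if l = 9 then 1 else 0 := by decide
lemma lwt_le2 : ∀ (l : Fin 10) (k : Fin 5), lwt l k ≤ 2 := by decide

-- increment/decrement tables on coordinate 0 (junk where undefined)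
def inc0 : Fin 10 → Fin 10 := ![3,4,5,6,7,8,0,0,0,0]
def dec0 : Fin 10 → Fin 10 := ![0,0,0,0,1,2,3,4,5,0]
def inc2 : Fin 10 → Fin 10 := ![1,2,0,4,5,0,7,8,0,0]
def dec2 : Fin 10 → Fin 10 := ![0,0,1,0,3,4,0,6,7,0]

lemma D0 : ∀ l l' : Fin 10, l ≠ 9 → l' ≠ 9 → lwt l 0 < 2 → 0 < lwt l' 0 →
    (inc0 l ≠ 9 ∧ dec0 l' ≠ 9 ∧ lwt (inc0 l) 0 = lwt l 0 + 1 ∧ lwt (inc0 l) 2 = lwt l 2 ∧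
     lwt (dec0 l') 0 + 1 = lwt l' 0 ∧ lwt (dec0 l') 2 = lwt l' 2 ∧
     (∀ k, lwt l k + lwt l' k = lwt (inc0 l) k + lwt (dec0 l') k)) := by decide

lemma D2 : ∀ l l' : Fin 10, l ≠ 9 → l' ≠ 9 → lwt l 2 < 2 → 0 < lwt l' 2 →
    (inc2 l ≠ 9 ∧ dec2 l' ≠ 9 ∧ lwt (inc2 l) 2 = lwt l 2 + 1 ∧ lwt (inc2 l) 0 = lwt l 0 ∧
     (lwt (dec2 l') 2) + 1 = lwt l' 2 ∧ lwt (dec2 l') 0 = lwt l' 0 ∧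
     (∀ k, lwt l k + lwt l' k = lwt (inc2 l) k + lwt (dec2 l') k)) := by decide


abbrev PC := Multiset (Fin 10 × Fin 10)

def Ok (pc : PC) : Prop := ∀ e ∈ pc, par e.1 = par e.2

def realz (pc : PC) : Multiset (Fin 18) := pc.map fun e => zOf e.1 e.2

def flat (pc : PC) : Multiset (Fin 10) := pc.bind fun e => e.1 ::ₘ {e.2}

def lsum (w : Multiset (Fin 10)) (k : Fin 5) : ℕ := (w.map (fun l => lwt l k)).sum

@[simp] lemma realz_zero : realz 0 = 0 := rfl
@[simp] lemma realz_cons (e : Fin 10 × Fin 10) (pc : PC) :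
    realz (e ::ₘ pc) = zOf e.1 e.2 ::ₘ realz pc := by simp [realz]
@[simp] lemma flat_zero : flat 0 = 0 := rfl
@[simp] lemma flat_cons (e : Fin 10 × Fin 10) (pc : PC) :
    flat (e ::ₘ pc) = e.1 ::ₘ e.2 ::ₘ flat pc := by
  simp only [flat, Multiset.cons_bind]
  rw [show (e.1 ::ₘ {e.2} : Multiset (Fin 10)) = e.1 ::ₘ e.2 ::ₘ 0 from rfl]
  rw [Multiset.cons_add, Multiset.cons_add, zero_add]
@[simp] lemma lsum_zero (k : Fin 5) : lsum 0 k = 0 := rfl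
@[simp] lemma lsum_cons (l : Fin 10) (w : Multiset (Fin 10)) (k : Fin 5) :
    lsum (l ::ₘ w) k = lwt l k + lsum w k := by simp [lsum]

lemma ok_cons {e : Fin 10 × Fin 10} {pc : PC} (h : Ok (e ::ₘ pc)) : Ok pc :=
  fun f hf => h f (Multiset.mem_cons_of_mem hf)

lemma ok_head {e : Fin 10 × Fin 10} {pc : PC} (h : Ok (e ::ₘ pc)) : par e.1 = par e.2 :=
  h e (Multiset.mem_cons_self e pc)

lemma card_flat (pc : PC) : Multiset.card (flat pc) = 2 * Multiset.card pc := by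
  induction pc using Multiset.induction_on with
  | empty => simp
  | cons e pc ih => simp [ih]; ring

lemma step_cons (z : Fin 18) {m m' : Multiset (Fin 18)} (h : Step m m') :
    Step (z ::ₘ m) (z ::ₘ m') := by
  obtain ⟨i, j, k, l, c, h1, h2, h3⟩ := h
  refine ⟨i, j, k, l, z ::ₘ c, ?_, ?_, h3⟩
  · rw [h1, Multiset.cons_swap z i, Multiset.cons_swap z j]
  · rw [h2, Multiset.cons_swap z k, Multiset.cons_swap z l]

lemma conn_cons (z : Fin 18) {m m' : Multiset (Fin 18)} (h : Conn m m') :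
    Conn (z ::ₘ m) (z ::ₘ m') := by
  induction h with
  | refl => exact conn_refl _
  | tail _ hstep ih => exact conn_trans ih (conn_of_step (step_cons z hstep))

lemma swap2 {a b c d a' b' c' d' : Fin 10} (r : Multiset (Fin 18))
    (hab : par a = par b) (hcd : par c = par d) (hab' : par a' = par b') (hcd' : par c' = par d')
    (h : ∀ k, lwt a k + lwt b k + (lwt c k + lwt d k)
        = lwt a' k + lwt b' k + (lwt c' k + lwt d' k)) :
    Step (zOf a b ::ₘ zOf c d ::ₘ r) (zOf a' b' ::ₘ zOf c' d' ::ₘ r) := by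
  refine ⟨zOf a b, zOf c d, zOf a' b', zOf c' d', r, rfl, rfl, ?_⟩
  ext k
  have e1 : (wtF (zOf a b) + wtF (zOf c d)) k = wt (zOf a b) k + wt (zOf c d) k := rfl
  have e2 : (wtF (zOf a' b') + wtF (zOf c' d')) k = wt (zOf a' b') k + wt (zOf c' d') k := rfl
  rw [e1, e2, F3 a b hab, F3 c d hcd, F3 a' b' hab', F3 c' d' hcd']
  exact h k

lemma ext1 {pc : PC} {p : Fin 10} (hok : Ok pc) (hp : p ∈ flat pc) :
    ∃ a pc₀, Ok ((p, a) ::ₘ pc₀) ∧ realz pc = realz ((p, a) ::ₘ pc₀) ∧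
      flat pc = p ::ₘ a ::ₘ flat pc₀ := by
  obtain ⟨e, he, hpe⟩ := Multiset.mem_bind.mp hp
  have hpc : pc = e ::ₘ pc.erase e := (Multiset.cons_erase he).symm
  have hok' : Ok (e ::ₘ pc.erase e) := by rw [← hpc]; exact hok
  rcases (by simpa using hpe : p = e.1 ∨ p = e.2) with h | h
  · refine ⟨e.2, pc.erase e, ?_, ?_, ?_⟩
    · intro f hf
      rcases Multiset.mem_cons.mp hf with rfl | hf'
      · rw [h]; exact ok_head hok'
      · exact ok_cons hok' f hf'
    · rw [hpc]; simp [h]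
    · rw [hpc]; simp [h]
  · refine ⟨e.1, pc.erase e, ?_, ?_, ?_⟩
    · intro f hf
      rcases Multiset.mem_cons.mp hf with rfl | hf'
      · rw [h]; exact (ok_head hok').symm
      · exact ok_cons hok' f hf'
    · rw [hpc]; simp [h, F4 e.1 e.2]
    · rw [hpc]; simp [h, Multiset.cons_swap]


lemma ext2same {pc : PC} {p q : Fin 10} {c : Multiset (Fin 10)} (hok : Ok pc)
    (hf : flat pc = p ::ₘ q ::ₘ c) (hpq : par p = par q) :
    ∃ pc₁, Ok ((p, q) ::ₘ pc₁) ∧ Conn (realz pc) (realz ((p, q) ::ₘ pc₁)) ∧ flat pc₁ = c := by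
  have hp : p ∈ flat pc := by rw [hf]; exact Multiset.mem_cons_self _ _
  obtain ⟨a, pc₀, hok₀, hre, hfl⟩ := ext1 hok hp
  have hpa : par p = par a := ok_head hok₀
  have hqa : q ::ₘ c = a ::ₘ flat pc₀ :=
    (Multiset.cons_inj_right p).mp (hf.symm.trans hfl)
  by_cases hq : q = a
  · subst hq
    refine ⟨pc₀, hok₀, ?_, ?_⟩
    · rw [hre]; exact conn_refl _
    · exact ((Multiset.cons_inj_right q).mp hqa).symm
  · have hq₀ : q ∈ flat pc₀ := by
      have : q ∈ a ::ₘ flat pc₀ := hqa ▸ Multiset.mem_cons_self q c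
      rcases Multiset.mem_cons.mp this with h | h
      · exact absurd h hq
      · exact h
    obtain ⟨b, pc₁, hok₁, hre₁, hfl₁⟩ := ext1 (ok_cons hok₀) hq₀
    have hqb : par q = par b := ok_head hok₁
    refine ⟨(a, b) ::ₘ pc₁, ?_, ?_, ?_⟩
    · intro f hf'
      rcases Multiset.mem_cons.mp hf' with rfl | hf'
      · exact hpq
      · rcases Multiset.mem_cons.mp hf' with rfl | hf''
        · rw [← hpa, ← hqb]; exact hpq
        · exact ok_cons hok₁ f hf''
    · rw [hre, realz_cons, hre₁, realz_cons, realz_cons, realz_cons]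
      apply conn_of_step
      exact swap2 (realz pc₁) hpa hqb hpq (by rw [← hpa, ← hqb]; exact hpq)
        (fun k => by ring)
    · have h1 : q ::ₘ c = q ::ₘ a ::ₘ b ::ₘ flat pc₁ := by
        rw [hqa, hfl₁, Multiset.cons_swap]
      have := (Multiset.cons_inj_right q).mp h1
      rw [flat_cons, this]

lemma ext2diff {pc : PC} {p q : Fin 10} {c : Multiset (Fin 10)} (hok : Ok pc)
    (hf : flat pc = p ::ₘ q ::ₘ c) (hpq : par p ≠ par q) :
    ∃ a b pc₁, Ok ((p, a) ::ₘ (q, b) ::ₘ pc₁) ∧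
      realz pc = realz ((p, a) ::ₘ (q, b) ::ₘ pc₁) ∧ c = a ::ₘ b ::ₘ flat pc₁ := by
  have hp : p ∈ flat pc := by rw [hf]; exact Multiset.mem_cons_self _ _
  obtain ⟨a, pc₀, hok₀, hre, hfl⟩ := ext1 hok hp
  have hpa : par p = par a := ok_head hok₀
  have hqa : q ::ₘ c = a ::ₘ flat pc₀ :=
    (Multiset.cons_inj_right p).mp (hf.symm.trans hfl)
  have hq : q ≠ a := fun h => hpq (by rw [h, hpa])
  have hq₀ : q ∈ flat pc₀ := by
    have : q ∈ a ::ₘ flat pc₀ := hqa ▸ Multiset.mem_cons_self q c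
    rcases Multiset.mem_cons.mp this with h | h
    · exact absurd h hq
    · exact h
  obtain ⟨b, pc₁, hok₁, hre₁, hfl₁⟩ := ext1 (ok_cons hok₀) hq₀
  have hqb : par q = par b := ok_head hok₁
  refine ⟨a, b, pc₁, ?_, ?_, ?_⟩
  · intro f hf'
    rcases Multiset.mem_cons.mp hf' with rfl | hf'
    · exact hpa
    · rcases Multiset.mem_cons.mp hf' with rfl | hf''
      · exact hqb
      · exact ok_cons hok₁ f hf''
  · rw [hre, realz_cons, hre₁, realz_cons, realz_cons, realz_cons]
  · have h1 : q ::ₘ c = q ::ₘ a ::ₘ b ::ₘ flat pc₁ := by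
      rw [hqa, hfl₁, Multiset.cons_swap]
    exact (Multiset.cons_inj_right q).mp h1

lemma pairflex : ∀ (n : ℕ) (pc pc' : PC), Multiset.card pc ≤ n → Ok pc → Ok pc' →
    flat pc = flat pc' → Conn (realz pc) (realz pc') := by
  intro n
  induction n with
  | zero =>
      intro pc pc' hc _ _ hf
      have h0 : pc = 0 := Multiset.card_eq_zero.mp (Nat.le_zero.mp hc)
      subst h0
      have : Multiset.card (flat pc') = 0 := by rw [← hf]; rfl
      rw [card_flat] at this
      have : pc' = 0 := Multiset.card_eq_zero.mp (by omega)
      rw [this]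
      exact conn_refl _
  | succ n ih =>
      intro pc pc' hc hok hok' hf
      rcases Multiset.empty_or_exists_mem pc' with h0 | ⟨e, he⟩
      · subst h0
        have : Multiset.card (flat pc) = 0 := by rw [hf]; rfl
        rw [card_flat] at this
        have : pc = 0 := Multiset.card_eq_zero.mp (by omega)
        rw [this]
        exact conn_refl _
      · have hpc' : pc' = e ::ₘ pc'.erase e := (Multiset.cons_erase he).symm
        have hok'' : Ok (e ::ₘ pc'.erase e) := by rw [← hpc']; exact hok'
        have hfe : flat pc = e.1 ::ₘ e.2 ::ₘ flat (pc'.erase e) := by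
          conv_lhs => rw [hf, hpc']
          rw [flat_cons]
        obtain ⟨pc₁, hok₁, hconn, hfl₁⟩ := ext2same hok hfe (ok_head hok'')
        have hcards : Multiset.card pc₁ ≤ n := by
          have c1 : Multiset.card (flat pc) = Multiset.card (flat pc') := by rw [hf]
          rw [card_flat, card_flat] at c1
          have c2 : Multiset.card (flat pc₁) = Multiset.card (flat (pc'.erase e)) := by
            rw [hfl₁]
          rw [card_flat, card_flat] at c2
          have c3 : Multiset.card pc' = Multiset.card (pc'.erase e) + 1 := by
            rw [hpc']; simp
          omega
        have ihc := ih pc₁ (pc'.erase e) hcards (ok_cons hok₁) (ok_cons hok'') hfl₁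
        rw [hpc', realz_cons]
        refine conn_trans hconn ?_
        rw [realz_cons]
        exact conn_cons _ ihc


def LStep (w w' : Multiset (Fin 10)) : Prop :=
  ∃ p q p' q' c, w = p ::ₘ q ::ₘ c ∧ w' = p' ::ₘ q' ::ₘ c ∧
    ∀ k, lwt p k + lwt q k = lwt p' k + lwt q' k

def LConn : Multiset (Fin 10) → Multiset (Fin 10) → Prop := Relation.ReflTransGen LStep

lemma lconn_refl (w : Multiset (Fin 10)) : LConn w w := Relation.ReflTransGen.refl

lemma lconn_trans {a b c : Multiset (Fin 10)} (h1 : LConn a b) (h2 : LConn b c) : LConn a c :=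
  Relation.ReflTransGen.trans h1 h2

lemma lconn_of_lstep {a b : Multiset (Fin 10)} (h : LStep a b) : LConn a b :=
  Relation.ReflTransGen.single h

lemma lstep_cons (l : Fin 10) {w w' : Multiset (Fin 10)} (h : LStep w w') :
    LStep (l ::ₘ w) (l ::ₘ w') := by
  obtain ⟨p, q, p', q', c, h1, h2, h3⟩ := h
  refine ⟨p, q, p', q', l ::ₘ c, ?_, ?_, h3⟩
  · rw [h1, Multiset.cons_swap l p, Multiset.cons_swap l q]
  · rw [h2, Multiset.cons_swap l p', Multiset.cons_swap l q']

lemma lconn_cons (l : Fin 10) {w w' : Multiset (Fin 10)} (h : LConn w w') :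
    LConn (l ::ₘ w) (l ::ₘ w') := by
  induction h with
  | refl => exact lconn_refl _
  | tail _ hstep ih => exact lconn_trans ih (lconn_of_lstep (lstep_cons l hstep))

lemma lconn_add (u : Multiset (Fin 10)) {w w' : Multiset (Fin 10)} (h : LConn w w') :
    LConn (u + w) (u + w') := by
  induction u using Multiset.induction_on with
  | empty => simpa using h
  | cons l u ih => rw [Multiset.cons_add, Multiset.cons_add]; exact lconn_cons l ih

lemma lstep_lsum {w w' : Multiset (Fin 10)} (h : LStep w w') (k : Fin 5) :
    lsum w k = lsum w' k := by
  obtain ⟨p, q, p', q', c, h1, h2, h3⟩ := h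
  rw [h1, h2, lsum_cons, lsum_cons, lsum_cons, lsum_cons]
  have := h3 k
  omega

lemma lstep_card {w w' : Multiset (Fin 10)} (h : LStep w w') :
    Multiset.card w = Multiset.card w' := by
  obtain ⟨p, q, p', q', c, h1, h2, _⟩ := h
  rw [h1, h2]; simp

lemma lconn_lsum {w w' : Multiset (Fin 10)} (h : LConn w w') (k : Fin 5) :
    lsum w k = lsum w' k := by
  induction h with
  | refl => rfl
  | tail _ hstep ih => rw [ih, lstep_lsum hstep]

lemma lconn_card {w w' : Multiset (Fin 10)} (h : LConn w w') :
    Multiset.card w = Multiset.card w' := by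
  induction h with
  | refl => rfl
  | tail _ hstep ih => rw [ih, lstep_card hstep]

lemma bool2 {a b c : Bool} (h1 : b ≠ a) (h2 : c ≠ a) : b = c := by
  cases a <;> cases b <;> cases c <;> simp_all

lemma sim {pc : PC} {w' : Multiset (Fin 10)} (hok : Ok pc) (h : LStep (flat pc) w') :
    ∃ pc', Ok pc' ∧ flat pc' = w' ∧ Conn (realz pc) (realz pc') := by
  obtain ⟨p, q, p', q', c, h1, h2, h3⟩ := h
  by_cases hpq : par p = par q
  · have hpq' : par p' = par q' := (PAR2 h3).mp hpq
    obtain ⟨pc₁, hok₁, hconn, hfl₁⟩ := ext2same hok h1 hpq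
    refine ⟨(p', q') ::ₘ pc₁, ?_, ?_, ?_⟩
    · intro f hf
      rcases Multiset.mem_cons.mp hf with rfl | hf'
      · exact hpq'
      · exact ok_cons hok₁ f hf'
    · rw [flat_cons, hfl₁, h2]
    · have heq : zOf p q = zOf p' q' := F6 p q p' q' hpq hpq' h3
      simp only [realz_cons] at hconn ⊢
      rw [← heq]
      exact hconn
  · have hpq' : ¬ par p' = par q' := fun h' => hpq ((PAR2 h3).mpr h')
    have hchoice : ∃ r s, par r = par p ∧ par s = par q ∧
        (∀ k, lwt r k + lwt s k = lwt p k + lwt q k) ∧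
        (p' ::ₘ q' ::ₘ c : Multiset (Fin 10)) = r ::ₘ s ::ₘ c := by
      by_cases hr : par p' = par p
      · have hs : par q' = par q :=
          bool2 (a := par p) (fun hh => hpq' (hr.trans hh.symm)) (fun hh => hpq hh.symm)
        exact ⟨p', q', hr, hs, fun k => (h3 k).symm, rfl⟩
      · have hs1 : par q' = par p :=
          bool2 (a := par p') (fun hh => hpq' hh.symm) (fun hh => hr hh.symm)
        have hs2 : par p' = par q :=
          bool2 (a := par p) hr (fun hh => hpq hh.symm)
        refine ⟨q', p', hs1, hs2, fun k => ?_, Multiset.cons_swap _ _ _⟩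
        have := h3 k
        omega
    obtain ⟨r, s, hr, hs, hws, hcs⟩ := hchoice
    obtain ⟨a, b, pc₁, hok₁, hre, hc⟩ := ext2diff hok h1 hpq
    have hpa : par p = par a := ok_head hok₁
    have hqb : par q = par b := ok_head (ok_cons hok₁)
    refine ⟨(r, a) ::ₘ (s, b) ::ₘ pc₁, ?_, ?_, ?_⟩
    · intro f hf
      rcases Multiset.mem_cons.mp hf with rfl | hf'
      · exact hr.trans hpa
      · rcases Multiset.mem_cons.mp hf' with rfl | hf''
        · exact hs.trans hqb
        · exact ok_cons (ok_cons hok₁) f hf''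
    · rw [flat_cons, flat_cons, h2, hcs, hc]
      rw [Multiset.cons_swap a s]
    · rw [hre, realz_cons, realz_cons, realz_cons, realz_cons]
      apply conn_of_step
      apply swap2 (realz pc₁) hpa hqb (hr.trans hpa) (hs.trans hqb)
      intro k
      have := hws k
      omega

lemma lift0 {pc : PC} {w' : Multiset (Fin 10)} (hok : Ok pc) (h : LConn (flat pc) w') :
    ∃ pc', Ok pc' ∧ flat pc' = w' ∧ Conn (realz pc) (realz pc') := by
  induction h with
  | refl => exact ⟨pc, hok, rfl, conn_refl _⟩
  | tail _ hstep ih =>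
      obtain ⟨pc₁, hok₁, hfl₁, hconn₁⟩ := ih
      have : LStep (flat pc₁) _ := hfl₁ ▸ hstep
      obtain ⟨pc₂, hok₂, hfl₂, hconn₂⟩ := sim hok₁ this
      exact ⟨pc₂, hok₂, hfl₂, conn_trans hconn₁ hconn₂⟩


lemma exd {r : Multiset (Fin 10)} {k : Fin 5} (h : 0 < lsum r k) : ∃ l ∈ r, 0 < lwt l k := by
  induction r using Multiset.induction_on with
  | empty => simp at h
  | cons l r ih =>
      rw [lsum_cons] at h
      by_cases hl : 0 < lwt l k
      · exact ⟨l, Multiset.mem_cons_self l r, hl⟩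
      · have : 0 < lsum r k := by omega
        obtain ⟨l', hl', h'⟩ := ih this
        exact ⟨l', Multiset.mem_cons_of_mem hl', h'⟩

lemma exr {r : Multiset (Fin 10)} {k : Fin 5} (h : lsum r k < 2 * Multiset.card r) :
    ∃ l ∈ r, lwt l k < 2 := by
  induction r using Multiset.induction_on with
  | empty => simp at h
  | cons l r ih =>
      rw [lsum_cons] at h
      by_cases hl : lwt l k < 2
      · exact ⟨l, Multiset.mem_cons_self l r, hl⟩
      · have hl2 : lwt l k = 2 := le_antisymm (lwt_le2 l k) (by omega)
        have : lsum r k < 2 * Multiset.card r := by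
          rw [Multiset.card_cons] at h; omega
        obtain ⟨l', hl', h'⟩ := ih this
        exact ⟨l', Multiset.mem_cons_of_mem hl', h'⟩

lemma lsum_le (r : Multiset (Fin 10)) (k : Fin 5) : lsum r k ≤ 2 * Multiset.card r := by
  induction r using Multiset.induction_on with
  | empty => simp
  | cons l r ih =>
      rw [lsum_cons, Multiset.card_cons]
      have := lwt_le2 l k
      omega

lemma pumpA : ∀ (d : ℕ) (l₀ : Fin 10) (r : Multiset (Fin 10)) (i : ℕ),
    l₀ ≠ 9 → (∀ l ∈ r, l ≠ 9) → i ≤ 2 →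
    (lwt l₀ 0 - i) + (i - lwt l₀ 0) = d →
    i ≤ lwt l₀ 0 + lsum r 0 → lwt l₀ 0 + lsum r 0 ≤ i + 2 * Multiset.card r →
    ∃ l₁ r₁, LConn (l₀ ::ₘ r) (l₁ ::ₘ r₁) ∧ l₁ ≠ 9 ∧ (∀ l ∈ r₁, l ≠ 9) ∧
      lwt l₁ 0 = i ∧ lwt l₁ 2 = lwt l₀ 2 ∧ Multiset.card r₁ = Multiset.card r ∧
      lsum r₁ 2 = lsum r 2 := by
  intro d
  induction d with
  | zero =>
      intro l₀ r i h9 hr9 _ hd _ _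
      have : lwt l₀ 0 = i := by omega
      exact ⟨l₀, r, lconn_refl _, h9, hr9, this, rfl, rfl, rfl⟩
  | succ d ih =>
      intro l₀ r i h9 hr9 hi2 hd hlb hub
      by_cases hlt : lwt l₀ 0 < i
      · -- increase head; find donor in r
        have hpos : 0 < lsum r 0 := by omega
        obtain ⟨ld, hld, hldpos⟩ := exd hpos
        have hld9 : ld ≠ 9 := hr9 ld hld
        have hrsplit : r = ld ::ₘ r.erase ld := (Multiset.cons_erase hld).symm
        have hlwt : lwt l₀ 0 < 2 := by omega
        obtain ⟨hi9, hd9, hif, his, hdf, hds, hwk⟩ := D0 l₀ ld h9 hld9 hlwt hldpos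
        have hstep : LStep (l₀ ::ₘ ld ::ₘ r.erase ld) (inc0 l₀ ::ₘ dec0 ld ::ₘ r.erase ld) :=
          ⟨l₀, ld, inc0 l₀, dec0 ld, r.erase ld, rfl, rfl, hwk⟩
        have hr9' : ∀ l ∈ (dec0 ld ::ₘ r.erase ld), l ≠ 9 := by
          intro l hl
          rcases Multiset.mem_cons.mp hl with rfl | hl'
          · exact hd9
          · exact hr9 l (hrsplit ▸ Multiset.mem_cons_of_mem hl')
        have hr0 : lsum r 0 = lwt ld 0 + lsum (r.erase ld) 0 := by
          conv_lhs => rw [hrsplit]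
          rw [lsum_cons]
        have hr2 : lsum r 2 = lwt ld 2 + lsum (r.erase ld) 2 := by
          conv_lhs => rw [hrsplit]
          rw [lsum_cons]
        have hrc : Multiset.card r = Multiset.card (r.erase ld) + 1 := by
          conv_lhs => rw [hrsplit]
          rw [Multiset.card_cons]
        have hsum0 : lsum (dec0 ld ::ₘ r.erase ld) 0 + 1 = lsum r 0 := by
          rw [lsum_cons]; omega
        have hcard' : Multiset.card (dec0 ld ::ₘ r.erase ld) = Multiset.card r := by
          rw [Multiset.card_cons]; omega
        obtain ⟨l₁, r₁, hc, h1, h2, h3, h4, h5, h6⟩ :=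
          ih (inc0 l₀) (dec0 ld ::ₘ r.erase ld) i hi9 hr9' hi2 (by omega)
            (by rw [hif]; omega) (by rw [hif, hcard']; omega)
        have hc0 : LConn (l₀ ::ₘ r) (inc0 l₀ ::ₘ dec0 ld ::ₘ r.erase ld) := by
          conv_lhs => rw [hrsplit]
          exact lconn_of_lstep hstep
        refine ⟨l₁, r₁, lconn_trans hc0 hc, h1, h2, h3, by rw [h4, his],
          by rw [h5, hcard'], ?_⟩
        rw [h6, lsum_cons, hds]; omega
      · -- decrease head; find recipient in r
        have hgt : i < lwt l₀ 0 := by omega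
        have hlt2 : lsum r 0 < 2 * Multiset.card r := by omega
        obtain ⟨le, hle, hle2⟩ := exr hlt2
        have hle9 : le ≠ 9 := hr9 le hle
        have hrsplit : r = le ::ₘ r.erase le := (Multiset.cons_erase hle).symm
        have hpos0 : 0 < lwt l₀ 0 := by omega
        obtain ⟨hi9, hd9, hif, his, hdf, hds, hwk⟩ := D0 le l₀ hle9 h9 hle2 hpos0
        have hstep : LStep (l₀ ::ₘ le ::ₘ r.erase le) (dec0 l₀ ::ₘ inc0 le ::ₘ r.erase le) :=
          ⟨l₀, le, dec0 l₀, inc0 le, r.erase le, rfl, rfl, fun k => by have := hwk k; omega⟩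
        have hr9' : ∀ l ∈ (inc0 le ::ₘ r.erase le), l ≠ 9 := by
          intro l hl
          rcases Multiset.mem_cons.mp hl with rfl | hl'
          · exact hi9
          · exact hr9 l (hrsplit ▸ Multiset.mem_cons_of_mem hl')
        have hr0 : lsum r 0 = lwt le 0 + lsum (r.erase le) 0 := by
          conv_lhs => rw [hrsplit]
          rw [lsum_cons]
        have hr2 : lsum r 2 = lwt le 2 + lsum (r.erase le) 2 := by
          conv_lhs => rw [hrsplit]
          rw [lsum_cons]
        have hrc : Multiset.card r = Multiset.card (r.erase le) + 1 := by
          conv_lhs => rw [hrsplit]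
          rw [Multiset.card_cons]
        have hsum0 : lsum (inc0 le ::ₘ r.erase le) 0 = lsum r 0 + 1 := by
          rw [lsum_cons, hif]; omega
        have hcard' : Multiset.card (inc0 le ::ₘ r.erase le) = Multiset.card r := by
          rw [Multiset.card_cons]; omega
        obtain ⟨l₁, r₁, hc, h1, h2, h3, h4, h5, h6⟩ :=
          ih (dec0 l₀) (inc0 le ::ₘ r.erase le) i hd9 hr9' hi2 (by omega)
            (by omega) (by rw [hcard']; omega)
        have hc0 : LConn (l₀ ::ₘ r) (dec0 l₀ ::ₘ inc0 le ::ₘ r.erase le) := by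
          conv_lhs => rw [hrsplit]
          exact lconn_of_lstep hstep
        refine ⟨l₁, r₁, lconn_trans hc0 hc, h1, h2, h3, by rw [h4, hds],
          by rw [h5, hcard'], ?_⟩
        rw [h6, lsum_cons, his]; omega


lemma pumpB : ∀ (d : ℕ) (l₀ : Fin 10) (r : Multiset (Fin 10)) (i : ℕ),
    l₀ ≠ 9 → (∀ l ∈ r, l ≠ 9) → i ≤ 2 →
    (lwt l₀ 2 - i) + (i - lwt l₀ 2) = d →
    i ≤ lwt l₀ 2 + lsum r 2 → lwt l₀ 2 + lsum r 2 ≤ i + 2 * Multiset.card r →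
    ∃ l₁ r₁, LConn (l₀ ::ₘ r) (l₁ ::ₘ r₁) ∧ l₁ ≠ 9 ∧ (∀ l ∈ r₁, l ≠ 9) ∧
      lwt l₁ 2 = i ∧ lwt l₁ 0 = lwt l₀ 0 ∧ Multiset.card r₁ = Multiset.card r ∧
      lsum r₁ 0 = lsum r 0 := by
  intro d
  induction d with
  | zero =>
      intro l₀ r i h9 hr9 _ hd _ _
      have : lwt l₀ 2 = i := by omega
      exact ⟨l₀, r, lconn_refl _, h9, hr9, this, rfl, rfl, rfl⟩
  | succ d ih =>
      intro l₀ r i h9 hr9 hi2 hd hlb hub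
      by_cases hlt : lwt l₀ 2 < i
      · -- increase head; find donor in r
        have hpos : 0 < lsum r 2 := by omega
        obtain ⟨ld, hld, hldpos⟩ := exd hpos
        have hld9 : ld ≠ 9 := hr9 ld hld
        have hrsplit : r = ld ::ₘ r.erase ld := (Multiset.cons_erase hld).symm
        have hlwt : lwt l₀ 2 < 2 := by omega
        obtain ⟨hi9, hd9, hif, his, hdf, hds, hwk⟩ := D2 l₀ ld h9 hld9 hlwt hldpos
        have hstep : LStep (l₀ ::ₘ ld ::ₘ r.erase ld) (inc2 l₀ ::ₘ dec2 ld ::ₘ r.erase ld) :=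
          ⟨l₀, ld, inc2 l₀, dec2 ld, r.erase ld, rfl, rfl, hwk⟩
        have hr9' : ∀ l ∈ (dec2 ld ::ₘ r.erase ld), l ≠ 9 := by
          intro l hl
          rcases Multiset.mem_cons.mp hl with rfl | hl'
          · exact hd9
          · exact hr9 l (hrsplit ▸ Multiset.mem_cons_of_mem hl')
        have hr0 : lsum r 2 = lwt ld 2 + lsum (r.erase ld) 2 := by
          conv_lhs => rw [hrsplit]
          rw [lsum_cons]
        have hr2 : lsum r 0 = lwt ld 0 + lsum (r.erase ld) 0 := by
          conv_lhs => rw [hrsplit]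
          rw [lsum_cons]
        have hrc : Multiset.card r = Multiset.card (r.erase ld) + 1 := by
          conv_lhs => rw [hrsplit]
          rw [Multiset.card_cons]
        have hsum0 : lsum (dec2 ld ::ₘ r.erase ld) 2 + 1 = lsum r 2 := by
          rw [lsum_cons]; omega
        have hcard' : Multiset.card (dec2 ld ::ₘ r.erase ld) = Multiset.card r := by
          rw [Multiset.card_cons]; omega
        obtain ⟨l₁, r₁, hc, h1, h2, h3, h4, h5, h6⟩ :=
          ih (inc2 l₀) (dec2 ld ::ₘ r.erase ld) i hi9 hr9' hi2 (by omega)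
            (by rw [hif]; omega) (by rw [hif, hcard']; omega)
        have hc0 : LConn (l₀ ::ₘ r) (inc2 l₀ ::ₘ dec2 ld ::ₘ r.erase ld) := by
          conv_lhs => rw [hrsplit]
          exact lconn_of_lstep hstep
        refine ⟨l₁, r₁, lconn_trans hc0 hc, h1, h2, h3, by rw [h4, his],
          by rw [h5, hcard'], ?_⟩
        rw [h6, lsum_cons, hds]; omega
      · -- decrease head; find recipient in r
        have hgt : i < lwt l₀ 2 := by omega
        have hlt2 : lsum r 2 < 2 * Multiset.card r := by omega
        obtain ⟨le, hle, hle2⟩ := exr hlt2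
        have hle9 : le ≠ 9 := hr9 le hle
        have hrsplit : r = le ::ₘ r.erase le := (Multiset.cons_erase hle).symm
        have hpos0 : 0 < lwt l₀ 2 := by omega
        obtain ⟨hi9, hd9, hif, his, hdf, hds, hwk⟩ := D2 le l₀ hle9 h9 hle2 hpos0
        have hstep : LStep (l₀ ::ₘ le ::ₘ r.erase le) (dec2 l₀ ::ₘ inc2 le ::ₘ r.erase le) :=
          ⟨l₀, le, dec2 l₀, inc2 le, r.erase le, rfl, rfl, fun k => by have := hwk k; omega⟩
        have hr9' : ∀ l ∈ (inc2 le ::ₘ r.erase le), l ≠ 9 := by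
          intro l hl
          rcases Multiset.mem_cons.mp hl with rfl | hl'
          · exact hi9
          · exact hr9 l (hrsplit ▸ Multiset.mem_cons_of_mem hl')
        have hr0 : lsum r 2 = lwt le 2 + lsum (r.erase le) 2 := by
          conv_lhs => rw [hrsplit]
          rw [lsum_cons]
        have hr2 : lsum r 0 = lwt le 0 + lsum (r.erase le) 0 := by
          conv_lhs => rw [hrsplit]
          rw [lsum_cons]
        have hrc : Multiset.card r = Multiset.card (r.erase le) + 1 := by
          conv_lhs => rw [hrsplit]
          rw [Multiset.card_cons]
        have hsum0 : lsum (inc2 le ::ₘ r.erase le) 2 = lsum r 2 + 1 := by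
          rw [lsum_cons, hif]; omega
        have hcard' : Multiset.card (inc2 le ::ₘ r.erase le) = Multiset.card r := by
          rw [Multiset.card_cons]; omega
        obtain ⟨l₁, r₁, hc, h1, h2, h3, h4, h5, h6⟩ :=
          ih (dec2 l₀) (inc2 le ::ₘ r.erase le) i hd9 hr9' hi2 (by omega)
            (by omega) (by rw [hcard']; omega)
        have hc0 : LConn (l₀ ::ₘ r) (dec2 l₀ ::ₘ inc2 le ::ₘ r.erase le) := by
          conv_lhs => rw [hrsplit]
          exact lconn_of_lstep hstep
        refine ⟨l₁, r₁, lconn_trans hc0 hc, h1, h2, h3, by rw [h4, hds],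
          by rw [h5, hcard'], ?_⟩
        rw [h6, lsum_cons, his]; omega


lemma yreach {m : Multiset (Fin 10)} {l' : Fin 10} (hy : ∀ l ∈ m, l ≠ 9) (hl' : l' ≠ 9)
    (hm : m ≠ 0)
    (h0le : lwt l' 0 ≤ lsum m 0) (h0ub : lsum m 0 + 2 ≤ lwt l' 0 + 2 * Multiset.card m)
    (h2le : lwt l' 2 ≤ lsum m 2) (h2ub : lsum m 2 + 2 ≤ lwt l' 2 + 2 * Multiset.card m) :
    ∃ t, LConn m (l' ::ₘ t) := by
  obtain ⟨l₀, hl₀⟩ := Multiset.exists_mem_of_ne_zero hm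
  have hsplit : m = l₀ ::ₘ m.erase l₀ := (Multiset.cons_erase hl₀).symm
  set r := m.erase l₀ with hr
  have hs0 : lsum m 0 = lwt l₀ 0 + lsum r 0 := by
    conv_lhs => rw [hsplit]
    rw [lsum_cons]
  have hs2 : lsum m 2 = lwt l₀ 2 + lsum r 2 := by
    conv_lhs => rw [hsplit]
    rw [lsum_cons]
  have hsc : Multiset.card m = Multiset.card r + 1 := by
    conv_lhs => rw [hsplit]
    rw [Multiset.card_cons]
  have hy0 : l₀ ≠ 9 := hy l₀ hl₀
  have hyr : ∀ l ∈ r, l ≠ 9 := fun l hl => hy l (hsplit ▸ Multiset.mem_cons_of_mem hl)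
  obtain ⟨l₁, r₁, hc1, h19, hr19, h1f, h1s, h1c, h1l2⟩ :=
    pumpA ((lwt l₀ 0 - lwt l' 0) + (lwt l' 0 - lwt l₀ 0)) l₀ r (lwt l' 0) hy0 hyr
      (lwt_le2 l' 0) rfl (by omega) (by omega)
  obtain ⟨l₂, r₂, hc2, h29, hr29, h2f, h2s, h2c, h2l0⟩ :=
    pumpB ((lwt l₁ 2 - lwt l' 2) + (lwt l' 2 - lwt l₁ 2)) l₁ r₁ (lwt l' 2) h19 hr19
      (lwt_le2 l' 2) rfl (by omega) (by omega)
  have hl2 : l₂ = l' := yinj l₂ l' h29 hl' (by omega) (by omega)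
  refine ⟨r₂, ?_⟩
  rw [← hl2, hsplit]
  exact lconn_trans hc1 hc2

lemma lsum_add (a b : Multiset (Fin 10)) (k : Fin 5) :
    lsum (a + b) k = lsum a k + lsum b k := by simp [lsum]

lemma lsum4_count : ∀ w : Multiset (Fin 10), lsum w 4 = w.count 9 := by
  intro w
  induction w using Multiset.induction_on with
  | empty => simp
  | cons l w ih =>
      rw [lsum_cons, ih, lwt4 l, Multiset.count_cons]
      by_cases h : l = 9
      · subst h
        simp only [if_pos rfl]
        omega
      · rw [if_neg h, if_neg (fun hh => h hh.symm)]
        omega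

lemma lsum_of9 : ∀ u : Multiset (Fin 10), (∀ l ∈ u, l = (9 : Fin 10)) →
    lsum u 0 = 0 ∧ lsum u 2 = 0 ∧ lsum u 4 = Multiset.card u := by
  intro u
  induction u using Multiset.induction_on with
  | empty => simp
  | cons l u ih =>
      intro h
      have hl : l = 9 := h l (Multiset.mem_cons_self l u)
      obtain ⟨i0, i2, i4⟩ := ih (fun l' hl' => h l' (Multiset.mem_cons_of_mem hl'))
      subst hl
      have e0 : lwt (9 : Fin 10) 0 = 0 := rfl
      have e2 : lwt (9 : Fin 10) 2 = 0 := rfl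
      have e4 : lwt (9 : Fin 10) 4 = 1 := rfl
      refine ⟨?_, ?_, ?_⟩ <;> rw [lsum_cons] <;>
        simp only [Multiset.card_cons, e0, e2, e4] <;> omega

lemma lsum4_y : ∀ v : Multiset (Fin 10), (∀ l ∈ v, l ≠ (9 : Fin 10)) → lsum v 4 = 0 := by
  intro v
  induction v using Multiset.induction_on with
  | empty => simp
  | cons l v ih =>
      intro h
      rw [lsum_cons, ih (fun l' hl' => h l' (Multiset.mem_cons_of_mem hl')), lwt4 l,
        if_neg (h l (Multiset.mem_cons_self l v))]

lemma lconn_main : ∀ (n : ℕ) (w w' : Multiset (Fin 10)), Multiset.card w ≤ n →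
    Multiset.card w = Multiset.card w' → (∀ k, lsum w k = lsum w' k) → LConn w w' := by
  intro n
  induction n with
  | zero =>
      intro w w' hc hcc _
      have hw : w = 0 := Multiset.card_eq_zero.mp (Nat.le_zero.mp hc)
      have hw' : w' = 0 := Multiset.card_eq_zero.mp (by omega)
      rw [hw, hw']
      exact lconn_refl _
  | succ n ih =>
      intro w w' hc hcc hs
      rcases Multiset.empty_or_exists_mem w' with rfl | ⟨l', hl'⟩
      · have hw : w = 0 := Multiset.card_eq_zero.mp (by simpa using hcc)
        rw [hw]
        exact lconn_refl _
      · have hw' : w' = l' ::ₘ w'.erase l' := (Multiset.cons_erase hl').symm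
        have key : ∃ t, LConn w (l' ::ₘ t) := by
          by_cases h9 : l' = (9 : Fin 10)
          · subst h9
            have h4 := hs 4
            rw [lsum4_count, lsum4_count] at h4
            have hpos : 0 < w'.count 9 := Multiset.count_pos.mpr hl'
            have hmem : (9 : Fin 10) ∈ w := Multiset.count_pos.mp (by omega)
            exact ⟨w.erase 9, by rw [Multiset.cons_erase hmem]; exact lconn_refl _⟩
          · set u := w.filter (fun l => l = (9 : Fin 10)) with hu
            set v := w.filter (fun l => ¬ l = (9 : Fin 10)) with hv
            have hsplit : u + v = w := Multiset.filter_add_not _ w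
            set u' := w'.filter (fun l => l = (9 : Fin 10)) with hu'
            set v' := w'.filter (fun l => ¬ l = (9 : Fin 10)) with hv'
            have hsplit' : u' + v' = w' := Multiset.filter_add_not _ w'
            have hv9 : ∀ l ∈ v, l ≠ 9 := fun l hl => (Multiset.mem_filter.mp hl).2
            have hv9' : ∀ l ∈ v', l ≠ 9 := fun l hl => (Multiset.mem_filter.mp hl).2
            obtain ⟨hu0, hu2, hu4⟩ := lsum_of9 u (fun l hl => (Multiset.mem_filter.mp hl).2)
            obtain ⟨hu0', hu2', hu4'⟩ := lsum_of9 u' (fun l hl => (Multiset.mem_filter.mp hl).2)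
            have hvv4 : lsum v 4 = 0 := lsum4_y v hv9
            have hvv4' : lsum v' 4 = 0 := lsum4_y v' hv9'
            have hl'v : l' ∈ v' := Multiset.mem_filter_of_mem hl' h9
            have hv'split : v' = l' ::ₘ v'.erase l' := (Multiset.cons_erase hl'v).symm
            have hw0 : lsum u 0 + lsum v 0 = lsum w 0 := by rw [← hsplit, lsum_add]
            have hw2 : lsum u 2 + lsum v 2 = lsum w 2 := by rw [← hsplit, lsum_add]
            have hw4 : lsum u 4 + lsum v 4 = lsum w 4 := by rw [← hsplit, lsum_add]
            have hw0' : lsum u' 0 + lsum v' 0 = lsum w' 0 := by rw [← hsplit', lsum_add]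
            have hw2' : lsum u' 2 + lsum v' 2 = lsum w' 2 := by rw [← hsplit', lsum_add]
            have hw4' : lsum u' 4 + lsum v' 4 = lsum w' 4 := by rw [← hsplit', lsum_add]
            have hcu : Multiset.card u + Multiset.card v = Multiset.card w := by
              rw [← hsplit]; exact (Multiset.card_add u v).symm
            have hcu' : Multiset.card u' + Multiset.card v' = Multiset.card w' := by
              rw [← hsplit']; exact (Multiset.card_add u' v').symm
            have hs0 := hs 0
            have hs2 := hs 2
            have hs4 := hs 4
            have hcardv : Multiset.card v = Multiset.card v' := by omega
            have hvne : v ≠ 0 := by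
              intro h0
              have hcv' : Multiset.card v' = 0 := by rw [← hcardv, h0]; rfl
              have : v' = 0 := Multiset.card_eq_zero.mp hcv'
              rw [this] at hl'v
              simp at hl'v
            have hv'0 : lsum v' 0 = lwt l' 0 + lsum (v'.erase l') 0 := by
              conv_lhs => rw [hv'split]
              rw [lsum_cons]
            have hv'2 : lsum v' 2 = lwt l' 2 + lsum (v'.erase l') 2 := by
              conv_lhs => rw [hv'split]
              rw [lsum_cons]
            have hv'c : Multiset.card v' = Multiset.card (v'.erase l') + 1 := by
              conv_lhs => rw [hv'split]
              rw [Multiset.card_cons]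
            have hb0 := lsum_le (v'.erase l') 0
            have hb2 := lsum_le (v'.erase l') 2
            obtain ⟨t, ht⟩ := yreach hv9 h9 hvne (by omega) (by omega) (by omega) (by omega)
            have hconn : LConn (u + v) (u + (l' ::ₘ t)) := lconn_add u ht
            rw [hsplit] at hconn
            have heq : u + (l' ::ₘ t) = l' ::ₘ (u + t) := by
              rw [add_comm, Multiset.cons_add, add_comm]
            exact ⟨u + t, heq ▸ hconn⟩
        obtain ⟨t, ht⟩ := key
        have hcw : Multiset.card (l' ::ₘ t) = Multiset.card w := (lconn_card ht).symm
        rw [Multiset.card_cons] at hcw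
        have hcw' : Multiset.card w' = Multiset.card (w'.erase l') + 1 := by
          conv_lhs => rw [hw']
          rw [Multiset.card_cons]
        have htt : LConn t (w'.erase l') := by
          apply ih t (w'.erase l') (by omega) (by omega)
          intro k
          have h1 := lconn_lsum ht k
          have h2 := hs k
          have h3 : lsum w' k = lwt l' k + lsum (w'.erase l') k := by
            conv_lhs => rw [hw']
            rw [lsum_cons]
          rw [lsum_cons] at h1
          omega
        rw [hw']
        exact lconn_trans ht (lconn_cons l' htt)

def pcof (m : Multiset (Fin 18)) : PC := m.map pr

lemma realz_pcof (m : Multiset (Fin 18)) : realz (pcof m) = m := by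
  rw [realz, pcof, Multiset.map_map]
  conv_rhs => rw [← Multiset.map_id m]
  exact Multiset.map_congr rfl (fun z _ => F5 z)

lemma ok_pcof (m : Multiset (Fin 18)) : Ok (pcof m) := by
  intro e he
  obtain ⟨z, _, rfl⟩ := Multiset.mem_map.mp he
  exact F2 z

lemma lsum_flat_pcof (m : Multiset (Fin 18)) (k : Fin 5) :
    lsum (flat (pcof m)) k = wsum m k := by
  induction m using Multiset.induction_on with
  | empty => simp [pcof]
  | cons z m ih =>
      have h1 : pcof (z ::ₘ m) = pr z ::ₘ pcof m := Multiset.map_cons pr z m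
      rw [h1, flat_cons, lsum_cons, lsum_cons, ih, wsum_cons, Finsupp.add_apply]
      have h2 : wtF z k = wt z k := rfl
      rw [h2, ← F1 z k]
      ring

lemma conn_of_wsum (m m' : Multiset (Fin 18)) (h : wsum m = wsum m') : Conn m m' := by
  have hcard : Multiset.card m = Multiset.card m' := card_eq_of_wsum m m' h
  have hl : LConn (flat (pcof m)) (flat (pcof m')) := by
    apply lconn_main (Multiset.card (flat (pcof m))) _ _ le_rfl
    · rw [card_flat, card_flat]
      simp [pcof, hcard]
    · intro k
      rw [lsum_flat_pcof, lsum_flat_pcof, h]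
  obtain ⟨pc2, hok2, hfl2, hconn2⟩ := lift0 (ok_pcof m) hl
  have h2 : Conn (realz pc2) (realz (pcof m')) :=
    pairflex (Multiset.card pc2) pc2 (pcof m') le_rfl hok2 (ok_pcof m') hfl2
  have h3 := conn_trans hconn2 h2
  rwa [realz_pcof, realz_pcof] at h3

lemma ker_sub_J : ∀ (n : ℕ) (f : MvPolynomial (Fin 18) ℂ), f.support.card ≤ n → tau f = 0 → f ∈ J := by
  intro n
  induction n with
  | zero =>
      intro f hcard _
      have : f.support = ∅ := Finset.card_eq_zero.mp (Nat.le_zero.mp hcard)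
      rw [MvPolynomial.support_eq_empty.mp this]
      exact Ideal.zero_mem _
  | succ n ih =>
      intro f hcard hker
      by_cases hf0 : f = 0
      · rw [hf0]; exact Ideal.zero_mem _
      obtain ⟨a, ha⟩ := (MvPolynomial.support_nonempty.mpr hf0)
      -- expand tau f and take coefficient at Esum a
      have hexp : tau f = ∑ d ∈ f.support, monomial (Esum d) (coeff d f) := by
        conv_lhs => rw [← MvPolynomial.support_sum_monomial_coeff f]
        rw [map_sum]
        exact Finset.sum_congr rfl fun d _ => tau_monomial d (coeff d f)
      have hcoeff : (0 : ℂ) = ∑ d ∈ f.support, if Esum d = Esum a then coeff d f else 0 := by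
        have : coeff (Esum a) (tau f) = 0 := by rw [hker]; simp
        rw [hexp, MvPolynomial.coeff_sum f.support (fun d => monomial (Esum d) (coeff d f)) (Esum a)] at this
        exact this.symm.trans (Finset.sum_congr rfl fun d _ => coeff_monomial (Esum a) (Esum d) (coeff d f))
      -- find b ≠ a in support with same Esum
      have hb : ∃ b ∈ f.support, b ≠ a ∧ Esum b = Esum a := by
        by_contra hno
        push_neg at hno
        have hss : (∑ d ∈ f.support, if Esum d = Esum a then coeff d f else 0)
            = (if Esum a = Esum a then coeff a f else 0) := by
          apply Finset.sum_eq_single_of_mem a ha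
          intro b hbs hbne
          simp [hno b hbs hbne]
        rw [hss, if_pos rfl] at hcoeff
        exact (MvPolynomial.mem_support_iff.mp ha) hcoeff.symm
      obtain ⟨b, hbs, hbne, hbE⟩ := hb
      set c : ℂ := coeff a f with hc
      set q : MvPolynomial (Fin 18) ℂ := monomial a 1 - monomial b 1 with hq
      have hqJ : q ∈ J := by
        have hconn : Conn a.toMultiset b.toMultiset := conn_of_wsum _ _ hbE.symm
        have := conn_diff_mem hconn
        rwa [← monomial_eq_mOf, ← monomial_eq_mOf] at this
      have hqker : tau q = 0 := by
        rw [hq, map_sub, tau_monomial, tau_monomial, hbE, sub_self]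
      set g : MvPolynomial (Fin 18) ℂ := f - C c * q with hg
      have hgker : tau g = 0 := by
        rw [hg, map_sub, map_mul, hqker, mul_zero, sub_zero, hker]
      have hgsupp : g.support ⊆ f.support.erase a := by
        intro x hx
        have hxg : coeff x g ≠ 0 := MvPolynomial.mem_support_iff.mp hx
        have hcg : coeff x g = coeff x f - c * ((if a = x then 1 else 0) - (if b = x then 1 else 0)) := by
          rw [hg, hq]
          simp [MvPolynomial.coeff_sub, MvPolynomial.coeff_C_mul, coeff_monomial, mul_sub]
        rw [Finset.mem_erase]
        constructor
        · rintro rfl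
          rw [if_pos rfl, if_neg hbne, sub_zero, mul_one, ← hc, sub_self] at hcg
          exact hxg hcg
        · by_cases hxb : x = b
          · rw [hxb]; exact hbs
          · have hax : x ≠ a := by
              rintro rfl
              rw [if_pos rfl, if_neg hbne, sub_zero, mul_one, ← hc, sub_self] at hcg
              exact hxg hcg
            rw [if_neg (fun h => hax h.symm), if_neg (fun h => hxb h.symm)] at hcg
            simp only [sub_self, mul_zero, sub_zero] at hcg
            rw [MvPolynomial.mem_support_iff, ← hcg]
            exact hxg
      have hgcard : g.support.card ≤ n := by
        have h1 : (f.support.erase a).card < f.support.card := Finset.card_erase_lt_of_mem ha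
        have h2 : g.support.card ≤ (f.support.erase a).card := Finset.card_le_card hgsupp
        omega
      have hgJ : g ∈ J := ih g hgcard hgker
      have : f = g + C c * q := by rw [hg]; ring
      rw [this]
      exact Ideal.add_mem _ hgJ (Ideal.mul_mem_left _ _ hqJ)

/-- The kernel of τ (the homogeneous ideal of Prokhorov's Enriques–Fano threefold
W_P¹⁷ ⊂ ℙ¹⁷ of genus 17) is generated by its homogeneous elements of degree 2. -/
theorem ideal_of_WP17_generated_by_quadrics :
    RingHom.ker tau =
      Ideal.span {f : MvPolynomial (Fin 18) ℂ |
        f ∈ RingHom.ker tau ∧ f.IsHomogeneous 2} := by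
  apply le_antisymm
  · intro f hf
    exact ker_sub_J f.support.card f le_rfl (RingHom.mem_ker.mp hf)
  · rw [Ideal.span_le]
    intro f hf
    exact hf.1
end

section
/- In ℂ⁸ with coordinates (z₁,z₂,z₃,z₄,z₅,z₆,z₈,z₉), the common zero set of the fifteen polynomials z₈z₉, z₆z₉, z₅z₉, z₂z₉, z₁z₉, z₆z₈, z₅z₈, z₃z₈, z₁z₈, z₅z₆, z₄z₆, z₂z₆, z₄z₅, z₃z₅, z₂z₃−z₁z₄ is exactly the union of the following five sets: the linear subspace {z₁=z₂=z₅=z₆=z₈=0}, the linear subspace {z₁=z₃=z₅=z₆=z₉=0}, the linear subspace {z₃=z₄=z₆=z₈=z₉=0}, the linear subspace {z₂=z₄=z₅=z₈=z₉=0}, and the quadric cone {z₅=z₆=z₈=z₉=0, z₂z₃=z₁z₄}. -/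
/-! Write z₁, …, z₆, z₈, z₉ for `p 0, …, p 7`. The coordinates z₅, z₆, z₈, z₉ multiply pairwise
to zero, so at most one of them is nonzero. If one is, the equations it appears in kill the
coordinates off one of the four planes; if none is, only z₂z₃ = z₁z₄ remains: the quadric cone. -/

/-- In ℂ⁸ with coordinates (z₁,z₂,z₃,z₄,z₅,z₆,z₈,z₉) — here `p 0,…,p 7`
respectively — the common zero set of the fifteen polynomials
z₈z₉, z₆z₉, z₅z₉, z₂z₉, z₁z₉, z₆z₈, z₅z₈, z₃z₈, z₁z₈, z₅z₆, z₄z₆, z₂z₆,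
z₄z₅, z₃z₅, z₂z₃−z₁z₄ is exactly the union of four linear subspaces
(the planes π₁, π₂, π₁′, π₂′) and a quadric cone (the cone over Q). -/
theorem tangent_cone_of_WKLM9_at_P5 :
    {p : Fin 8 → ℂ |
        p 6 * p 7 = 0 ∧ p 5 * p 7 = 0 ∧ p 4 * p 7 = 0 ∧ p 1 * p 7 = 0 ∧
        p 0 * p 7 = 0 ∧ p 5 * p 6 = 0 ∧ p 4 * p 6 = 0 ∧ p 2 * p 6 = 0 ∧
        p 0 * p 6 = 0 ∧ p 4 * p 5 = 0 ∧ p 3 * p 5 = 0 ∧ p 1 * p 5 = 0 ∧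
        p 3 * p 4 = 0 ∧ p 2 * p 4 = 0 ∧ p 1 * p 2 - p 0 * p 3 = 0} =
      {p : Fin 8 → ℂ | p 0 = 0 ∧ p 1 = 0 ∧ p 4 = 0 ∧ p 5 = 0 ∧ p 6 = 0} ∪
      {p : Fin 8 → ℂ | p 0 = 0 ∧ p 2 = 0 ∧ p 4 = 0 ∧ p 5 = 0 ∧ p 7 = 0} ∪
      {p : Fin 8 → ℂ | p 2 = 0 ∧ p 3 = 0 ∧ p 5 = 0 ∧ p 6 = 0 ∧ p 7 = 0} ∪
      {p : Fin 8 → ℂ | p 1 = 0 ∧ p 3 = 0 ∧ p 4 = 0 ∧ p 6 = 0 ∧ p 7 = 0} ∪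
      {p : Fin 8 → ℂ | p 4 = 0 ∧ p 5 = 0 ∧ p 6 = 0 ∧ p 7 = 0 ∧
        p 1 * p 2 = p 0 * p 3} := by
  ext p
  simp only [Set.mem_ofPred_eq, Set.mem_union, sub_eq_zero]
  constructor
  · rintro ⟨h67, h57, h47, h17, h07, h56, h46, h26, h06, h45, h35, h15, h34, h24, hQ⟩
    have kill {a b : ℂ} (hb : b ≠ 0) (h : a * b = 0) : a = 0 :=
      eq_zero_of_ne_zero_of_mul_right_eq_zero hb h
    obtain hz₉ | hz₉ := ne_or_eq (p 7) 0
    · exact .inl <| .inl <| .inl <| .inl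
        ⟨kill hz₉ h07, kill hz₉ h17, kill hz₉ h47, kill hz₉ h57, kill hz₉ h67⟩
    obtain hz₈ | hz₈ := ne_or_eq (p 6) 0
    · exact .inl <| .inl <| .inl <| .inr
        ⟨kill hz₈ h06, kill hz₈ h26, kill hz₈ h46, kill hz₈ h56, hz₉⟩
    obtain hz₆ | hz₆ := ne_or_eq (p 5) 0
    · exact .inl <| .inr ⟨kill hz₆ h15, kill hz₆ h35, kill hz₆ h45, hz₈, hz₉⟩
    obtain hz₅ | hz₅ := ne_or_eq (p 4) 0
    · exact .inl <| .inl <| .inr ⟨kill hz₅ h24, kill hz₅ h34, hz₆, hz₈, hz₉⟩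
    · exact .inr ⟨hz₅, hz₆, hz₈, hz₉, hQ⟩
  · rintro ((((h | h) | h) | h) | h) <;> simp_all
end
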